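/- With the notation below: for 1 ≤ i ≤ a and 2 ≤ r ≤ b, with l = a+i+r−1, one has w_{i,r}(l) = i and w_{i,r}(l−1) = 2a+b+r−1; and for 1 ≤ i ≤ a−1, with l = a+b+i+1, one has w_{i,1}(l) = i+1 and w_{i,1}(l−1) = 2a+2b. -/

import Mathlib

/-- `sw j` is the adjacent transposition `s_j` exchanging `j-1` and `j` (for `j ≥ 2`). -/
def sw (j : ℕ) : Equiv.Perm ℕ := Equiv.swap (j - 1) j

/-- `compSeq f lo len = f lo ∘ f (lo+1) ∘ ⋯ ∘ f (lo+len-1)` (rightmost applied first). -/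
def compSeq (f : ℕ → Equiv.Perm ℕ) (lo len : ℕ) : Equiv.Perm ℕ :=
  ((List.range' lo len).map f).prod

/-- `compSeqRev f lo len = f (lo+len-1) ∘ ⋯ ∘ f (lo+1) ∘ f lo`. -/
def compSeqRev (f : ℕ → Equiv.Perm ℕ) (lo len : ℕ) : Equiv.Perm ℕ :=
  ((List.range' lo len).map f).reverse.prod

/-- `μ_i = s_{a+i+1} ∘ ⋯ ∘ s_{a+i+b}`. -/
def mu5 (a b i : ℕ) : Equiv.Perm ℕ := compSeq sw (a + i + 1) b

/-- `w_{i,r} = (s_{a+i+r} ∘ ⋯ ∘ s_{a+i+b}) ∘ (μ_{i−1} ∘ ⋯ ∘ μ_1) ∘ w ∘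
(μ_1⁻¹ ∘ ⋯ ∘ μ_{i−1}⁻¹) ∘ (s_{a+i+b}⁻¹ ∘ ⋯ ∘ s_{a+i+r}⁻¹)`. -/
def wir5 (a b : ℕ) (w : Equiv.Perm ℕ) (i r : ℕ) : Equiv.Perm ℕ :=
  compSeq sw (a + i + r) (b + 1 - r) * compSeqRev (mu5 a b) 1 (i - 1) * w *
    (compSeqRev (mu5 a b) 1 (i - 1))⁻¹ * (compSeq sw (a + i + r) (b + 1 - r))⁻¹

lemma compSeq_sw_apply (m len x : ℕ) :
    compSeq sw (m+1) len x =
      if len ≠ 0 ∧ x = m + len then m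
      else if m ≤ x ∧ x < m + len then x + 1 else x := by
  induction len generalizing m x with
  | zero =>
    simp only [compSeq, List.range'_zero, List.map_nil, List.prod_nil, Equiv.Perm.one_apply]
    split_ifs <;> omega
  | succ n ih =>
    have h : compSeq sw (m+1) (n+1) = sw (m+1) * compSeq sw (m+1+1) n := by
      simp [compSeq, List.range'_succ]
    rw [h, Equiv.Perm.mul_apply, ih]
    simp only [sw, Nat.add_sub_cancel, Equiv.swap_apply_def]
    split_ifs <;> omega

lemma compSeq_sw_inv_apply (m len x : ℕ) :
    (compSeq sw (m+1) len)⁻¹ x =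
      if len ≠ 0 ∧ x = m then m + len
      else if m + 1 ≤ x ∧ x ≤ m + len then x - 1 else x := by
  rw [Equiv.Perm.inv_def, Equiv.symm_apply_eq, compSeq_sw_apply]
  split_ifs <;> omega

lemma compSeqRev_succ (f : ℕ → Equiv.Perm ℕ) (k : ℕ) :
    compSeqRev f 1 (k+1) = f (k+1) * compSeqRev f 1 k := by
  have : List.range' 1 (k+1) = List.range' 1 k ++ [1+k] := by
    have := List.range'_concat (step := 1) (s := 1) (n := k); simpa using this
  simp [compSeqRev, this, Nat.add_comm 1 k]

lemma mu5_apply (a b i x : ℕ) :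
    mu5 a b i x = if b ≠ 0 ∧ x = a + i + b then a + i
      else if a + i ≤ x ∧ x < a + i + b then x + 1 else x :=
  compSeq_sw_apply (a+i) b x

lemma mu5_inv_apply (a b i x : ℕ) :
    (mu5 a b i)⁻¹ x = if b ≠ 0 ∧ x = a + i then a + i + b
      else if a + i + 1 ≤ x ∧ x ≤ a + i + b then x - 1 else x :=
  compSeq_sw_inv_apply (a+i) b x

lemma M_fix (a b k x : ℕ) (hx : x ≤ a ∨ a + k + b + 1 ≤ x) :
    compSeqRev (mu5 a b) 1 k x = x := by
  induction k with
  | zero => simp [compSeqRev]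
  | succ n ih =>
    rw [compSeqRev_succ, Equiv.Perm.mul_apply, ih (by omega), mu5_apply]
    split_ifs <;> omega

lemma M_fix_inv (a b k x : ℕ) (hx : x ≤ a ∨ a + k + b + 1 ≤ x) :
    (compSeqRev (mu5 a b) 1 k)⁻¹ x = x := by
  rw [Equiv.Perm.inv_def, Equiv.symm_apply_eq, M_fix a b k x hx]

lemma M_inv_shift (a b k t : ℕ) (ht1 : 1 ≤ t) (ht2 : t ≤ b) :
    (compSeqRev (mu5 a b) 1 k)⁻¹ (a + t + k) = a + t := by
  induction k with
  | zero => simp [compSeqRev]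
  | succ n ih =>
    rw [compSeqRev_succ, mul_inv_rev, Equiv.Perm.mul_apply]
    have h1 : (mu5 a b (n+1))⁻¹ (a + t + (n+1)) = a + t + n := by
      rw [mu5_inv_apply]; split_ifs <;> omega
    rw [h1, ih]


/-- Layout `{1,…,c} = A₁ ∪ A₂ ∪ B₁ ∪ B₂` with `c = 2a+2b`, `|A₁|=|B₁|=a`,
`|A₂|=|B₂|=b`; `w` exchanges `A_k` and `B_k` order-preservingly.  For `1 ≤ i ≤ a` and
`2 ≤ r ≤ b`, with `l = a+i+r−1`, one has `w_{i,r}(l) = i` and `w_{i,r}(l−1) = 2a+b+r−1`;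
and for `1 ≤ i ≤ a−1`, with `l = a+b+i+1`, one has `w_{i,1}(l) = i+1` and
`w_{i,1}(l−1) = 2a+2b`. -/
theorem stmt_6 (a b : ℕ) (ha : 1 ≤ a) (hb : 1 ≤ b)
    (w : Equiv.Perm ℕ)
    (hw : ∀ x : ℕ, w x =
      if 1 ≤ x ∧ x ≤ a + b then x + (a + b)
      else if a + b + 1 ≤ x ∧ x ≤ 2 * a + 2 * b then x - (a + b)
      else x) :
    (∀ i r : ℕ, 1 ≤ i → i ≤ a → 2 ≤ r → r ≤ b →
      wir5 a b w i r (a + i + r - 1) = i ∧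
        wir5 a b w i r (a + i + r - 2) = 2 * a + b + r - 1) ∧
    (∀ i : ℕ, 1 ≤ i → i ≤ a - 1 →
      wir5 a b w i 1 (a + b + i + 1) = i + 1 ∧
        wir5 a b w i 1 (a + b + i) = 2 * a + 2 * b) := by
  constructor
  · intro i r hi1 hi2 hr2 hrb
    obtain ⟨r', rfl⟩ : ∃ r', r = r' + 2 := ⟨r - 2, by omega⟩
    obtain ⟨s, rfl⟩ : ∃ s, b = r' + 2 + s := ⟨b - (r' + 2), by omega⟩
    obtain ⟨i', rfl⟩ : ∃ i', i = i' + 1 := ⟨i - 1, by omega⟩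
    have hT : a + (i' + 1) + (r' + 2) = a + i' + r' + 2 + 1 := by omega
    have hlen : r' + 2 + s + 1 - (r' + 2) = s + 1 := by omega
    have hk : i' + 1 - 1 = i' := by omega
    simp only [wir5, Equiv.Perm.mul_apply, hT, hlen, hk]
    have e1 : a + i' + r' + 2 + 1 - 1 = a + i' + r' + 2 := by omega
    have e2 : a + i' + r' + 2 + 1 - 2 = a + i' + r' + 1 := by omega
    rw [e1, e2]
    constructor
    · have h1 : (compSeq sw (a + i' + r' + 2 + 1) (s + 1))⁻¹ (a + i' + r' + 2)
          = a + i' + r' + s + 3 := by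
        rw [compSeq_sw_inv_apply]; split_ifs <;> omega
      have h2 : (compSeqRev (mu5 a (r' + 2 + s)) 1 i')⁻¹ (a + i' + r' + s + 3)
          = a + i' + r' + s + 3 := M_fix_inv _ _ _ _ (by omega)
      have h3 : w (a + i' + r' + s + 3) = i' + 1 := by
        rw [hw]; split_ifs <;> omega
      have h4 : compSeqRev (mu5 a (r' + 2 + s)) 1 i' (i' + 1) = i' + 1 :=
        M_fix _ _ _ _ (by omega)
      have h5 : compSeq sw (a + i' + r' + 2 + 1) (s + 1) (i' + 1) = i' + 1 := by
        rw [compSeq_sw_apply]; split_ifs <;> omega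
      rw [h1, h2, h3, h4, h5]
    · have h1 : (compSeq sw (a + i' + r' + 2 + 1) (s + 1))⁻¹ (a + i' + r' + 1)
          = a + i' + r' + 1 := by
        rw [compSeq_sw_inv_apply]; split_ifs <;> omega
      have h2 : (compSeqRev (mu5 a (r' + 2 + s)) 1 i')⁻¹ (a + i' + r' + 1)
          = a + (r' + 1) := by
        rw [show a + i' + r' + 1 = a + (r' + 1) + i' from by omega]
        exact M_inv_shift _ _ _ _ (by omega) (by omega)
      have h3 : w (a + (r' + 1)) = 2 * a + 2 * r' + s + 3 := by
        rw [hw]; split_ifs <;> omega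
      have h4 : compSeqRev (mu5 a (r' + 2 + s)) 1 i' (2 * a + 2 * r' + s + 3)
          = 2 * a + 2 * r' + s + 3 := M_fix _ _ _ _ (by omega)
      have h5 : compSeq sw (a + i' + r' + 2 + 1) (s + 1) (2 * a + 2 * r' + s + 3)
          = 2 * a + 2 * r' + s + 3 := by
        rw [compSeq_sw_apply]; split_ifs <;> omega
      rw [h1, h2, h3, h4, h5]; omega
  · intro i hi1 hi2
    obtain ⟨i'', rfl⟩ : ∃ i'', i = i'' + 1 := ⟨i - 1, by omega⟩
    obtain ⟨b', rfl⟩ : ∃ b', b = b' + 1 := ⟨b - 1, by omega⟩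
    have hia : i'' + 2 ≤ a := by omega
    have hT : a + (i'' + 1) + 1 = a + i'' + 1 + 1 := by omega
    have hlen : b' + 1 + 1 - 1 = b' + 1 := by omega
    have hk : i'' + 1 - 1 = i'' := by omega
    simp only [wir5, Equiv.Perm.mul_apply, hT, hlen, hk]
    constructor
    · have h1 : (compSeq sw (a + i'' + 1 + 1) (b' + 1))⁻¹ (a + (b' + 1) + (i'' + 1) + 1)
          = a + (b' + 1) + (i'' + 1) + 1 := by
        rw [compSeq_sw_inv_apply]; split_ifs <;> omega
      have h2 : (compSeqRev (mu5 a (b' + 1)) 1 i'')⁻¹ (a + (b' + 1) + (i'' + 1) + 1)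
          = a + (b' + 1) + (i'' + 1) + 1 := M_fix_inv _ _ _ _ (by omega)
      have h3 : w (a + (b' + 1) + (i'' + 1) + 1) = i'' + 1 + 1 := by
        rw [hw]; split_ifs <;> omega
      have h4 : compSeqRev (mu5 a (b' + 1)) 1 i'' (i'' + 1 + 1) = i'' + 1 + 1 :=
        M_fix _ _ _ _ (by omega)
      have h5 : compSeq sw (a + i'' + 1 + 1) (b' + 1) (i'' + 1 + 1) = i'' + 1 + 1 := by
        rw [compSeq_sw_apply]; split_ifs <;> omega
      rw [h1, h2, h3, h4, h5]
    · have h1 : (compSeq sw (a + i'' + 1 + 1) (b' + 1))⁻¹ (a + (b' + 1) + (i'' + 1))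
          = a + b' + i'' + 1 := by
        rw [compSeq_sw_inv_apply]; split_ifs <;> omega
      have h2 : (compSeqRev (mu5 a (b' + 1)) 1 i'')⁻¹ (a + b' + i'' + 1)
          = a + (b' + 1) := by
        rw [show a + b' + i'' + 1 = a + (b' + 1) + i'' from by omega]
        exact M_inv_shift _ _ _ _ (by omega) (by omega)
      have h3 : w (a + (b' + 1)) = 2 * a + 2 * b' + 2 := by
        rw [hw]; split_ifs <;> omega
      have h4 : compSeqRev (mu5 a (b' + 1)) 1 i'' (2 * a + 2 * b' + 2)
          = 2 * a + 2 * b' + 2 := M_fix _ _ _ _ (by omega)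
      have h5 : compSeq sw (a + i'' + 1 + 1) (b' + 1) (2 * a + 2 * b' + 2)
          = 2 * a + 2 * b' + 2 := by
        rw [compSeq_sw_apply]; split_ifs <;> omega
      rw [h1, h2, h3, h4, h5]; omega
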